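/- Let G be a simple graph on n vertices with walk matrix W = [e, Ae, A²e, …, A^{n−1}e]. Then 2^⌊n/2⌋ divides det(W); equivalently, in the prime factorization det(W) = ±2^α·p₁^{α₁}⋯p_s^{α_s} of a nonzero det(W), the exponent α of 2 satisfies α ≥ ⌊n/2⌋. -/

import Mathlib

open Matrix

open scoped Classical in
/-- The (0,1)-adjacency matrix of a simple graph on `Fin n`, with entries in `R`. -/
noncomputable def adjMat {n : ℕ} (R : Type*) [Zero R] [One R] (G : SimpleGraph (Fin n)) :
    Matrix (Fin n) (Fin n) R :=
  Matrix.of fun i j => if G.Adj i j then 1 else 0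

/-- The walk matrix `W = [e, Ae, A²e, …, A^{n−1}e]` of a square matrix `A`,
where `e` is the all-ones vector: the `j`-th column is `A^j e`. -/
noncomputable def walkMatrix {R : Type*} [CommRing R] {n : ℕ} (A : Matrix (Fin n) (Fin n) R) :
    Matrix (Fin n) (Fin n) R :=
  Matrix.of fun i j => (A ^ (j : ℕ) *ᵥ fun _ => 1) i

/-!
Reduce modulo 2. Over `𝔽₂` the walk counts `eᵀ Aᵐ e` vanish for `m ≥ 1`: for `m = 2k` it is
`|Aᵏe|² = eᵀ Aᵏ e` because `x² = x`, and for `m = 2k + 1` it is the value at `Aᵏe` of the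
alternating form given by the symmetric, zero-diagonal matrix `A`. So the Gram matrix `WᵀW`
vanishes off its `(0,0)` entry, the columns `Aʲe` with `j ≥ 1` span a totally isotropic subspace,
and `W mod 2` has a kernel of dimension at least `⌊n/2⌋`. Each kernel vector lets one column of
the integer matrix be replaced, without changing the determinant, by an even column; halving it
and iterating yields one factor of 2 per dimension of the kernel.
-/

open Module

theorem Submodule.finrank_le_finrank_inf_ker_add_one {K V : Type*} [Field K] [AddCommGroup V]
    [Module K V] (p : Submodule K V) [FiniteDimensional K p] (f : V →ₗ[K] K) :
    finrank K p ≤ finrank K ↥(p ⊓ LinearMap.ker f) + 1 := by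
  have hrank := LinearMap.finrank_range_add_finrank_ker (f.domRestrict p)
  have hrange : finrank K (LinearMap.range (f.domRestrict p)) ≤ 1 :=
    (Submodule.finrank_le _).trans (finrank_self K).le
  rw [LinearMap.ker_domRestrict, ← Submodule.finrank_map_subtype_eq,
    Submodule.map_comap_subtype] at hrank
  omega

namespace Matrix

theorem two_mul_rank_le_of_transpose_mul_self_eq_zero {K m n : Type*} [Field K] [Fintype m]
    [Fintype n] {M : Matrix m n K} (h : Mᵀ * M = 0) : 2 * M.rank ≤ Fintype.card m := by
  have := rank_add_rank_le_card_of_mul_eq_zero h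
  rw [rank_transpose] at this
  omega

theorem rank_add_finrank_ker_mulVecLin {K m n : Type*} [Field K] [Fintype n]
    (M : Matrix m n K) : M.rank + finrank K (LinearMap.ker M.mulVecLin) = Fintype.card n := by
  rw [rank, LinearMap.finrank_range_add_finrank_ker, finrank_fintype_fun_eq_card]

theorem ker_mulVecLin_inf_ker_proj_le {R m n : Type*} [CommRing R] [Fintype n] [DecidableEq n]
    (M : Matrix m n R) (j : n) (c : m → R) :
    LinearMap.ker M.mulVecLin ⊓ LinearMap.ker (LinearMap.proj j) ≤
      LinearMap.ker (M.updateCol j c).mulVecLin := by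
  rintro x ⟨hMx, hxj⟩
  simp only [SetLike.mem_coe, LinearMap.mem_ker, mulVecLin_apply, LinearMap.proj_apply] at hMx hxj ⊢
  ext i
  rw [← congrFun hMx i]
  refine Finset.sum_congr rfl fun k _ => ?_
  by_cases hk : k = j
  · subst hk; simp [hxj]
  · simp [hk]

theorem det_updateCol_mulVec {R n : Type*} [CommRing R] [Fintype n] [DecidableEq n]
    (M : Matrix n n R) (j : n) (v : n → R) :
    (M.updateCol j (M *ᵥ v)).det = v j * M.det := by
  rw [← smul_eq_mul, ← det_updateCol_sum]
  congr
  ext k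
  simp [mulVec, dotProduct, mul_comm]

end Matrix

section PrimePowDvdDet

variable {ι : Type*} [Fintype ι] [DecidableEq ι] {p : ℕ} [Fact p.Prime]

theorem exists_det_eq_mul_det_updateCol_of_mem_ker (W : Matrix ι ι ℤ) {v : ι → ZMod p}
    (hv : v ∈ LinearMap.ker (W.map (Int.cast : ℤ → ZMod p)).mulVecLin) {j : ι} (hj : v j = 1) :
    ∃ c : ι → ℤ, W.det = p * (W.updateCol j c).det := by
  set u : ι → ℤ := fun i => ((v i).val : ℤ)
  have hu : (Int.cast : ℤ → ZMod p) ∘ u = v := by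
    ext i
    simp [u]
  have hdvd (i : ι) : (p : ℤ) ∣ (W *ᵥ u) i := by
    rw [← ZMod.intCast_zmod_eq_zero_iff_dvd, ← eq_intCast (Int.castRingHom (ZMod p)),
      RingHom.map_mulVec]
    simpa [hu] using congrFun hv i
  refine ⟨fun i => (W *ᵥ u) i / p, ?_⟩
  have hcol : W *ᵥ u = (p : ℤ) • fun i => (W *ᵥ u) i / p := by
    ext i
    simp [Int.mul_ediv_cancel' (hdvd i)]
  have huj : u j = 1 := by simp only [u, hj, ZMod.val_one, Nat.cast_one]
  rw [← det_updateCol_smul, ← hcol, det_updateCol_mulVec, huj, one_mul]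

theorem prime_pow_dvd_det_of_le_finrank_ker {k : ℕ} (W : Matrix ι ι ℤ)
    (hk : k ≤ finrank (ZMod p) (LinearMap.ker (W.map (Int.cast : ℤ → ZMod p)).mulVecLin)) :
    (p : ℤ) ^ k ∣ W.det := by
  induction k generalizing W with
  | zero => exact one_dvd _
  | succ k ih =>
    set K := LinearMap.ker (W.map (Int.cast : ℤ → ZMod p)).mulVecLin
    obtain ⟨v, hvK, hv0⟩ := Submodule.exists_mem_ne_zero_of_ne_bot fun hK : K = ⊥ => by
      rw [hK, finrank_bot] at hk
      omega
    obtain ⟨j, hj⟩ := Function.ne_iff.mp hv0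
    obtain ⟨c, hdet⟩ := exists_det_eq_mul_det_updateCol_of_mem_ker W
      (K.smul_mem (v j)⁻¹ hvK) (j := j) (by simp [inv_mul_cancel₀ hj])
    have hker : K ⊓ LinearMap.ker (LinearMap.proj j) ≤
        LinearMap.ker ((W.updateCol j c).map (Int.cast : ℤ → ZMod p)).mulVecLin := by
      rw [map_updateCol]
      exact ker_mulVecLin_inf_ker_proj_le _ j _
    have hcodim := K.finrank_le_finrank_inf_ker_add_one (LinearMap.proj j)
    have hmono := Submodule.finrank_mono hker
    rw [hdet, pow_succ']
    exact mul_dvd_mul_left _ (ih _ (by omega))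

end PrimePowDvdDet

section Walks

variable {R ι : Type*} [CommRing R] [Fintype ι] {A : Matrix ι ι R}

theorem Matrix.IsSymm.pow_mulVec_dotProduct_pow_mulVec [DecidableEq ι] (hA : A.IsSymm)
    (a b : ℕ) (v w : ι → R) :
    (A ^ a *ᵥ v) ⬝ᵥ (A ^ b *ᵥ w) = v ⬝ᵥ (A ^ (a + b) *ᵥ w) := by
  rw [← vecMul_transpose, (hA.pow a).eq, ← dotProduct_mulVec, mulVec_mulVec, pow_add]

theorem Matrix.IsSymm.dotProduct_mulVec_self_eq_zero [CharP R 2] (hA : A.IsSymm)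
    (hdiag : ∀ i, A i i = 0) (v : ι → R) : v ⬝ᵥ (A *ᵥ v) = 0 := by
  have hsum : v ⬝ᵥ (A *ᵥ v) = ∑ ij : ι × ι, v ij.1 * A ij.1 ij.2 * v ij.2 := by
    simp only [dotProduct, mulVec, Finset.mul_sum, ← Finset.univ_product_univ,
      Finset.sum_product, mul_assoc]
  rw [hsum]
  refine Finset.sum_ninvolution Prod.swap (fun ij => ?_) (fun ij hij hswap => hij ?_)
    (fun _ => Finset.mem_univ _) Prod.swap_swap
  · rw [Prod.fst_swap, Prod.snd_swap, hA.apply ij.1 ij.2]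
    linear_combination CharTwo.add_self_eq_zero (v ij.1 * A ij.1 ij.2 * v ij.2)
  · rw [show ij.2 = ij.1 from congrArg Prod.fst hswap, hdiag, mul_zero, zero_mul]

end Walks

section WalkCounts

variable {ι : Type*} [Fintype ι] {A : Matrix ι ι (ZMod 2)}

theorem ZMod.dotProduct_self_eq_one_dotProduct (v : ι → ZMod 2) : v ⬝ᵥ v = 1 ⬝ᵥ v := by
  simp only [dotProduct, ← sq, ZMod.pow_card, Pi.one_apply, one_mul]

theorem Matrix.IsSymm.one_dotProduct_pow_mulVec_one_eq_zero [DecidableEq ι] (hA : A.IsSymm)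
    (hdiag : ∀ i, A i i = 0) {m : ℕ} (hm : m ≠ 0) : 1 ⬝ᵥ (A ^ m *ᵥ 1) = 0 := by
  induction m using Nat.strong_induction_on with
  | _ m ih =>
    obtain ⟨k, rfl | rfl⟩ := Nat.even_or_odd' m
    · rw [two_mul, ← hA.pow_mulVec_dotProduct_pow_mulVec, ZMod.dotProduct_self_eq_one_dotProduct]
      exact ih k (by omega) (by omega)
    · rw [two_mul, add_assoc, ← hA.pow_mulVec_dotProduct_pow_mulVec, pow_succ', ← mulVec_mulVec]
      exact hA.dotProduct_mulVec_self_eq_zero hdiag _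

end WalkCounts

theorem walkMatrix_map {R S : Type*} [CommRing R] [CommRing S] {n : ℕ} (f : R →+* S)
    (A : Matrix (Fin n) (Fin n) R) : (walkMatrix A).map f = walkMatrix (A.map f) := by
  ext i j
  simp [walkMatrix, RingHom.map_mulVec, Matrix.map_pow, Function.comp_def]

section WalkMatrix

variable {n : ℕ}

theorem transpose_walkMatrix_mul_walkMatrix_apply {R : Type*} [CommRing R]
    {A : Matrix (Fin n) (Fin n) R} (hA : A.IsSymm) (i j : Fin n) :
    ((walkMatrix A)ᵀ * walkMatrix A) i j = 1 ⬝ᵥ (A ^ ((i : ℕ) + j) *ᵥ 1) :=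
  hA.pow_mulVec_dotProduct_pow_mulVec i j 1 1

variable {A : Matrix (Fin n) (Fin n) (ZMod 2)}

theorem transpose_walkMatrix_mul_walkMatrix_apply_eq_zero (hA : A.IsSymm)
    (hdiag : ∀ i, A i i = 0) {i j : Fin n} (hij : (i : ℕ) + j ≠ 0) :
    ((walkMatrix A)ᵀ * walkMatrix A) i j = 0 := by
  rw [transpose_walkMatrix_mul_walkMatrix_apply hA]
  exact hA.one_dotProduct_pow_mulVec_one_eq_zero hdiag hij

theorem two_mul_rank_walkMatrix_le_of_even (hA : A.IsSymm) (hdiag : ∀ i, A i i = 0)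
    (hn : Even n) : 2 * (walkMatrix A).rank ≤ n := by
  have hgram : (walkMatrix A)ᵀ * walkMatrix A = 0 := by
    ext i j
    by_cases hij : (i : ℕ) + j = 0
    · rw [transpose_walkMatrix_mul_walkMatrix_apply hA, hij, pow_zero, one_mulVec,
        one_dotProduct_one, Fintype.card_fin, (ZMod.natCast_eq_zero_iff_even).2 hn]
      rfl
    · exact transpose_walkMatrix_mul_walkMatrix_apply_eq_zero hA hdiag hij
  simpa using two_mul_rank_le_of_transpose_mul_self_eq_zero hgram

theorem two_mul_rank_walkMatrix_updateCol_zero_le [NeZero n] (hA : A.IsSymm)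
    (hdiag : ∀ i, A i i = 0) : 2 * ((walkMatrix A).updateCol 0 0).rank ≤ n := by
  have hgram : ((walkMatrix A).updateCol 0 0)ᵀ * (walkMatrix A).updateCol 0 0 = 0 := by
    ext i j
    rcases eq_or_ne i 0 with rfl | hi
    · simp [mul_apply]
    rcases eq_or_ne j 0 with rfl | hj
    · simp [mul_apply]
    have := transpose_walkMatrix_mul_walkMatrix_apply_eq_zero hA hdiag
      (by have := Fin.val_ne_zero_iff.mpr hi; omega : (i : ℕ) + j ≠ 0)
    simpa [mul_apply, updateCol_apply, hi, hj] using this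
  simpa using two_mul_rank_le_of_transpose_mul_self_eq_zero hgram

theorem le_finrank_ker_walkMatrix (hA : A.IsSymm) (hdiag : ∀ i, A i i = 0) :
    n / 2 ≤ finrank (ZMod 2) (LinearMap.ker (walkMatrix A).mulVecLin) := by
  have hW := (walkMatrix A).rank_add_finrank_ker_mulVecLin
  rw [Fintype.card_fin] at hW
  rcases Nat.even_or_odd n with hn | hn
  · have := two_mul_rank_walkMatrix_le_of_even hA hdiag hn
    omega
  -- For odd `n` only the column `e` is not isotropic; zeroing it costs at most one dimension.
  have : NeZero n := ⟨by rintro rfl; simp at hn⟩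
  have hrank := two_mul_rank_walkMatrix_updateCol_zero_le hA hdiag
  set W₀ := (walkMatrix A).updateCol 0 0
  have hW₀ := W₀.rank_add_finrank_ker_mulVecLin
  have hker : LinearMap.ker W₀.mulVecLin ⊓ LinearMap.ker (LinearMap.proj 0) ≤
      LinearMap.ker (walkMatrix A).mulVecLin := by
    simpa [W₀, updateCol_idem] using ker_mulVecLin_inf_ker_proj_le W₀ 0 fun k => walkMatrix A k 0
  have hcodim := (LinearMap.ker W₀.mulVecLin).finrank_le_finrank_inf_ker_add_one (LinearMap.proj 0)
  have hmono := Submodule.finrank_mono hker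
  rw [Fintype.card_fin] at hW₀
  have hodd := Nat.odd_iff.mp hn
  omega

end WalkMatrix

section AdjMat

variable {n : ℕ} (G : SimpleGraph (Fin n))

theorem adjMat_isSymm (R : Type*) [Zero R] [One R] : (adjMat R G).IsSymm := by
  ext i j
  by_cases h : G.Adj i j
  · simp [adjMat, h, h.symm]
  · simp [adjMat, h, mt G.adj_symm h]

theorem adjMat_apply_self (R : Type*) [Zero R] [One R] (i : Fin n) : adjMat R G i i = 0 := by
  simp [adjMat]

theorem adjMat_map {R S : Type*} [Semiring R] [Semiring S] (f : R →+* S) :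
    (adjMat R G).map f = adjMat S G := by
  ext i j
  simp [adjMat, apply_ite f]

end AdjMat

/-- **Corollary 4.3.** `2^⌊n/2⌋` divides `det W`. -/
theorem stmt_15 {n : ℕ} (G : SimpleGraph (Fin n))
    (W : Matrix (Fin n) (Fin n) ℤ) (hW : W = walkMatrix (adjMat ℤ G)) :
    (2 : ℤ) ^ (n / 2) ∣ W.det := by
  have hmod : W.map (Int.cast : ℤ → ZMod 2) = walkMatrix (adjMat (ZMod 2) G) := by
    rw [hW]
    exact (walkMatrix_map (Int.castRingHom (ZMod 2)) _).trans (by rw [adjMat_map])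
  have hker := le_finrank_ker_walkMatrix (adjMat_isSymm G (ZMod 2)) (adjMat_apply_self G (ZMod 2))
  rw [← hmod] at hker
  exact_mod_cast prime_pow_dvd_det_of_le_finrank_ker (p := 2) W hker
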